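/- arXiv:2301.00315 — 4 statements merged into one kernel-verified Lean document; each statement's English description precedes it below -/
import Mathlib

section
/- Let F = a_n ∏_{j=1}^n (x − α_j) with a_n ≠ 0 and let G₁,…,G_n ∈ ℂ[x] of degree at most 2n−2. Then the determinant polynomial of the (2n−1)-vector (F x^{n−2}, …, F x^0, G₁, …, G_n) equals a_n^{n−1}·det(G_i(α_j))_{i,j} / V(α₁,…,α_n), where V is the Vandermonde determinant; equivalently, dp(Fx^{n−2},…,Fx^0,G₁,…,G_n)·V(α₁,…,α_n) = a_n^{n−1}·det(G_i(α_j)). -/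
/-!
Choose `n - 1` further points `β`, distinct from each other and from the roots `α`. Multiplying
the coefficient matrix by the reversed Vandermonde matrix of the `2n - 1` points `β, α` gives the
matrix of values of the rows at these points. As `F` vanishes at every `αⱼ`, that matrix is block
triangular with diagonal blocks `(βₗ ^ (n-2-i) F(βₗ))` and `(Gᵢ(αⱼ))`. Comparing determinants
and cancelling the nonzero factor `V(β) ∏ (βₗ - αⱼ)`, which occurs on both sides, gives the
identity.
-/

open Polynomial Finset Matrix

section

variable {R : Type*} [CommRing R]

theorem det_of_pow_sub {n : ℕ} (v : Fin n → R) :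
    det (of fun i j : Fin n => v j ^ (n - 1 - (i : ℕ))) = ∏ i, ∏ j ∈ Ioi i, (v i - v j) := by
  rw [← det_transpose]
  convert det_projVandermonde 1 v using 2
  · ext i j
    simp [projVandermonde_apply, Fin.val_rev, Nat.sub_sub, Nat.add_comm]
  · simp

theorem prod_Ioi_append {M X : Type*} [CommMonoid M] {p q : ℕ} (f : X → X → M)
    (u : Fin p → X) (w : Fin q → X) :
    ∏ i, ∏ j ∈ Ioi i, f (Fin.append u w i) (Fin.append u w j) =
      (∏ i, ∏ j ∈ Ioi i, f (u i) (u j)) * (∏ i, ∏ j ∈ Ioi i, f (w i) (w j)) *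
        ∏ i, ∏ j, f (u i) (w j) := by
  have hlt (i : Fin p) (j : Fin q) : Fin.castAdd q i < Fin.natAdd p j := by
    simp only [Fin.lt_def, Fin.val_castAdd, Fin.val_natAdd]
    omega
  simp only [← filter_lt_eq_Ioi, prod_filter, Fin.prod_univ_add, Fin.append_left,
    Fin.append_right, (Fin.strictMono_castAdd q).lt_iff_lt, Fin.natAdd_lt_natAdd_iff, hlt,
    (hlt _ _).not_gt, if_true, if_false, prod_const_one, mul_one, prod_mul_distrib]
  ac_rfl

theorem det_of_sumElim_pow_sub {p q : ℕ} (u : Fin p → R) (w : Fin q → R) :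
    det (of fun c s : Fin p ⊕ Fin q => Sum.elim u w s ^ (p + q - 1 - finSumFinEquiv c)) =
      (∏ i, ∏ j ∈ Ioi i, (u i - u j)) * (∏ i, ∏ j ∈ Ioi i, (w i - w j)) *
        ∏ i, ∏ j, (u i - w j) := by
  have hreindex :
      of (fun c s : Fin p ⊕ Fin q => Sum.elim u w s ^ (p + q - 1 - finSumFinEquiv c)) =
        (of fun i j : Fin (p + q) => Fin.append u w j ^ (p + q - 1 - (i : ℕ))).submatrix
          finSumFinEquiv finSumFinEquiv := by
    ext (c | c) (s | s) <;> simp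
  rw [hreindex, det_submatrix_equiv_self, det_of_pow_sub, prod_Ioi_append (· - ·)]

theorem prod_Ioi_sub_ne_zero [IsDomain R] {n : ℕ} {v : Fin n → R} (hv : Function.Injective v) :
    ∏ i, ∏ j ∈ Ioi i, (v i - v j) ≠ 0 :=
  prod_ne_zero_iff.2 fun _ _ => prod_ne_zero_iff.2 fun _ hj =>
    sub_ne_zero.2 (hv.ne (mem_Ioi.1 hj).ne)

theorem coeff_mul_pow_eq_eval {S ι κ ν : Type*} [CommSemiring S] [Fintype κ] {N : ℕ}
    (e : κ ≃ Fin N) (P : ι → S[X]) (hP : ∀ i, (P i).natDegree < N) (x : ν → S) :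
    of (fun i c => (P i).coeff (N - 1 - e c)) * of (fun c j => x j ^ (N - 1 - e c)) =
      of fun i j => (P i).eval (x j) := by
  ext i j
  rw [mul_apply, of_apply, eval_eq_sum_range' (hP i), ← sum_range_reflect,
    ← Fin.sum_univ_eq_sum_range (fun k => (P i).coeff (N - 1 - k) * x j ^ (N - 1 - k)),
    ← e.sum_comp]
  rfl

theorem det_eval_sumElim_of_eval_eq_zero {ι κ : Type*} [Fintype ι] [Fintype κ]
    [DecidableEq ι] [DecidableEq κ] (F : R[X]) (Q : ι → R[X]) (G : κ → R[X]) (β : ι → R)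
    (α : κ → R) (hF : ∀ j, F.eval (α j) = 0) :
    det (of fun r s => (Sum.elim (fun i => F * Q i) G r).eval (Sum.elim β α s)) =
      (∏ l, F.eval (β l)) * det (of fun i l => (Q i).eval (β l)) *
        det (of fun i j => (G i).eval (α j)) := by
  have hblock : of (fun r s => (Sum.elim (fun i => F * Q i) G r).eval (Sum.elim β α s)) =
      fromBlocks (of fun i l => F.eval (β l) * (Q i).eval (β l)) 0
        (of fun i l => (G i).eval (β l)) (of fun i j => (G i).eval (α j)) := by
    ext (i | i) (l | l) <;> simp [hF]
  rw [hblock, det_fromBlocks_zero₁₂, ← det_mul_row]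
  rfl

end

theorem exists_injective_forall_notMem {X : Type*} [Infinite X] {s : Set X} (hs : s.Finite)
    (m : ℕ) : ∃ β : Fin m → X, Function.Injective β ∧ ∀ l, β l ∉ s :=
  let e := hs.infinite_compl.natEmbedding
  ⟨fun l => e l, fun _ _ h => Fin.val_injective (e.injective (Subtype.ext h)), fun l => (e l).2⟩

theorem dp_stack_eq_root_det_general (n : ℕ) (a : ℂ)
    (α : Fin n → ℂ) (F : Polynomial ℂ)
    (hF : F = C a * ∏ j : Fin n, (X - C (α j)))
    (G : Fin n → Polynomial ℂ) (hG : ∀ i, (G i).natDegree ≤ 2 * n - 2) :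
    Matrix.det (Matrix.of fun r c : Fin (n - 1) ⊕ Fin n =>
        (Sum.elim (fun i : Fin (n - 1) => F * X ^ (n - 2 - (i : ℕ)))
            (fun j : Fin n => G j) r).coeff (2 * n - 2 - ((finSumFinEquiv c : Fin ((n-1) + n)) : ℕ)))
      * (∏ i : Fin n, ∏ j ∈ Finset.Ioi i, (α i - α j))
      = a ^ (n - 1) * Matrix.det (Matrix.of fun i j : Fin n => (G i).eval (α j)) := by
  rcases Nat.eq_zero_or_pos n with rfl | hn
  · simp
  obtain ⟨β, hβ, hβα⟩ := exists_injective_forall_notMem (Set.finite_range α) (n - 1)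
  set P := Sum.elim (fun i : Fin (n - 1) => F * X ^ (n - 2 - (i : ℕ))) (fun j : Fin n => G j)
  have hFα (j : Fin n) : F.eval (α j) = 0 := by simp [hF, eval_prod, prod_eq_zero (mem_univ j)]
  have hFβ : ∏ l, F.eval (β l) = a ^ (n - 1) * ∏ l, ∏ j, (β l - α j) := by
    simp [hF, eval_prod, prod_mul_distrib]
  have hP : ∀ r, (P r).natDegree < n - 1 + n := by
    have hdegF : F.natDegree ≤ n := hF ▸ (natDegree_C_mul_le _ _).trans (by simp)
    rintro (i | j)
    · exact (natDegree_mul_le.trans (add_le_add hdegF (natDegree_X_pow_le _))).trans_lt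
        (by have := i.isLt; omega)
    · exact (hG j).trans_lt (by omega)
  have hdetQ : det (of fun i l : Fin (n - 1) => (X ^ (n - 2 - (i : ℕ))).eval (β l)) =
      ∏ i, ∏ j ∈ Ioi i, (β i - β j) := by
    rw [← det_of_pow_sub]
    simp only [eval_pow, eval_X, Nat.sub_sub]
  have hβα_ne : ∏ l, ∏ j, (β l - α j) ≠ 0 :=
    prod_ne_zero_iff.2 fun l _ => prod_ne_zero_iff.2 fun j _ =>
      sub_ne_zero.2 fun h => hβα l ⟨j, h.symm⟩
  rw [show 2 * n - 2 = n - 1 + n - 1 by omega]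
  apply mul_right_cancel₀ (mul_ne_zero (prod_Ioi_sub_ne_zero hβ) hβα_ne)
  calc _ = det (of (fun r c => (P r).coeff (n - 1 + n - 1 - finSumFinEquiv c)) *
          of (fun c s => Sum.elim β α s ^ (n - 1 + n - 1 - finSumFinEquiv c))) := by
        rw [det_mul, det_of_sumElim_pow_sub]
        ring
    _ = det (of fun r s => (P r).eval (Sum.elim β α s)) := by rw [coeff_mul_pow_eq_eval _ _ hP]
    _ = _ := by
      rw [det_eval_sumElim_of_eval_eq_zero _ _ _ _ _ hFα, hFβ, hdetQ]
      ring

/-- Let `F = a·∏ⱼ (x − αⱼ)` with `a ≠ 0` and `G₁,…,G_n` polynomials of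
degree at most `2n−2`.  Then the determinant polynomial of the `(2n−1)`-vector
`(F x^{n−2}, …, F x^0, G₁, …, G_n)` (the determinant of the `(2n−1)×(2n−1)` matrix
of coefficients, highest degree `x^{2n−2}` first) times the Vandermonde determinant
`V(α₁,…,α_n) = ∏_{i<j}(αᵢ − αⱼ)` equals `a^{n−1}·det(Gᵢ(αⱼ))`. -/
theorem dp_stack_eq_root_det (n : ℕ) (hn : 1 ≤ n) (a : ℂ) (ha : a ≠ 0)
    (α : Fin n → ℂ) (F : Polynomial ℂ)
    (hF : F = C a * ∏ j : Fin n, (X - C (α j)))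
    (G : Fin n → Polynomial ℂ) (hG : ∀ i, (G i).natDegree ≤ 2 * n - 2) :
    Matrix.det (Matrix.of fun r c : Fin (n - 1) ⊕ Fin n =>
        (Sum.elim (fun i : Fin (n - 1) => F * X ^ (n - 2 - (i : ℕ)))
            (fun j : Fin n => G j) r).coeff (2 * n - 2 - ((finSumFinEquiv c : Fin ((n-1) + n)) : ℕ)))
      * (∏ i : Fin n, ∏ j ∈ Finset.Ioi i, (α i - α j))
      = a ^ (n - 1) * Matrix.det (Matrix.of fun i j : Fin n => (G i).eval (α j)) :=
  dp_stack_eq_root_det_general n a α F hF G hG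
end

section
/- For a partition μ = (μ₁,…,μ_m) of n with m > 1 conjugate data m_i = #{k : μ_k ≥ i}, the quantity d_YHZ(μ) = ∏_{j=1}^{μ₂}(2m_j − 1) · c, where c = 1 if μ₁ = μ₂, c = 1 + 2/(2m_{μ₂}−1) if μ₁ = μ₂+1, and c = 2(μ₁−μ₂)−1 if μ₁ > μ₂+1, satisfies d_YHZ(μ) ≥ 2n + 3^{μ₂} − 4μ₂. -/
/-!
Let `m_j = #{k | j ≤ μ k}` be the column lengths of `μ` and `t = μ₂`. The columns `j ≤ t` contain
rows `1` and `2`, so `m_j ≥ 2`, while the columns `t < j ≤ μ₁` consist of row `1` alone; hence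
`n = ∑_{j ≤ t} m_j + (μ₁ - t)`. For `a_j ≥ 2` induction gives
`∏ (2 a_j - 1) ≥ 2 ∑ a_j + 3 ^ t - 4 t`, because each new factor multiplies a product that is
already at least `3 ^ t`. The correction factor `c` fits this bound: for `μ₁ = t + 1` it turns
the last factor `2 m_t - 1` into `2 (m_t + 1) - 1`, and for `μ₁ ≥ t + 2` it is one more factor
`2 (μ₁ - t) - 1 ≥ 3`.
-/

open Finset

section ProductBound

variable {ι R : Type*}

theorem three_pow_card_le_prod_two_mul_sub_one [CommRing R] [LinearOrder R]
    [IsStrictOrderedRing R] (s : Finset ι) (a : ι → R) (ha : ∀ i ∈ s, 2 ≤ a i) :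
    (3 : R) ^ #s ≤ ∏ i ∈ s, (2 * a i - 1) := by
  rw [← prod_const]
  exact prod_le_prod (fun _ _ => by norm_num) fun i hi => by linarith [ha i hi]

theorem two_mul_sum_add_three_pow_sub_le_prod [CommRing R] [LinearOrder R]
    [IsStrictOrderedRing R] (s : Finset ι) (a : ι → R) (ha : ∀ i ∈ s, 2 ≤ a i) :
    2 * ∑ i ∈ s, a i + 3 ^ #s - 4 * #s ≤ ∏ i ∈ s, (2 * a i - 1) := by
  classical
  induction s using Finset.induction_on with
  | empty => simp
  | insert i s hi ih =>
    have ha' : ∀ j ∈ s, 2 ≤ a j := fun j hj => ha j (mem_insert_of_mem hj)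
    have hai : 2 ≤ a i := ha i (mem_insert_self i s)
    have hP := ih ha'
    have h3 : (1 : R) ≤ 3 ^ #s := one_le_pow₀ (by norm_num)
    have hP3 := three_pow_card_le_prod_two_mul_sub_one s a ha'
    rw [prod_insert hi, sum_insert hi, card_insert_of_notMem hi]
    push_cast
    rw [pow_succ]
    -- `P (2x - 1) = P + P (2x - 2)` with `P ≥ 3 ^ #s`
    nlinarith [mul_le_mul_of_nonneg_right hP3 (by linarith : (0 : R) ≤ 2 * a i - 2),
      mul_nonneg (by linarith : (0 : R) ≤ 2 * a i - 4) (by linarith : (0 : R) ≤ 3 ^ #s - 1)]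

theorem two_mul_sum_add_one_add_three_pow_sub_le_prod_mul [Field R] [LinearOrder R]
    [IsStrictOrderedRing R] [DecidableEq ι] {s : Finset ι} {i : ι} (hi : i ∈ s) (a : ι → R)
    (ha : ∀ j ∈ s, 2 ≤ a j) :
    2 * (∑ i ∈ s, a i + 1) + 3 ^ #s - 4 * #s ≤
      (∏ i ∈ s, (2 * a i - 1)) * (1 + 2 / (2 * a i - 1)) := by
  have hbumped : ∀ j ∈ s, 2 ≤ Function.update a i (a i + 1) j := fun j hj => by
    rcases eq_or_ne j i with rfl | hji
    · simp only [Function.update_self]; linarith [ha j hj]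
    · simpa [hji] using ha j hj
  have key := two_mul_sum_add_three_pow_sub_le_prod s _ hbumped
  have hrest : ∀ j ∈ s.erase i, Function.update a i (a i + 1) j = a j :=
    fun j hj => Function.update_of_ne (ne_of_mem_erase hj) _ _
  rw [← mul_prod_erase s _ hi, ← add_sum_erase s _ hi,
    prod_congr rfl fun j hj => by rw [hrest j hj], sum_congr rfl hrest, Function.update_self] at key
  rw [← mul_prod_erase s _ hi, ← add_sum_erase s _ hi]
  have hne : 2 * a i - 1 ≠ 0 := by linarith [ha i hi]
  have hfactor : (2 * a i - 1) * (1 + 2 / (2 * a i - 1)) = 2 * (a i + 1) - 1 := by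
    field_simp
    ring
  rw [mul_right_comm, hfactor]
  linarith

theorem two_mul_sum_add_add_three_pow_sub_le_prod_mul [CommRing R] [LinearOrder R]
    [IsStrictOrderedRing R] {s : Finset ι} (hs : s.Nonempty) (a : ι → R) (ha : ∀ i ∈ s, 2 ≤ a i)
    {d : R} (hd : 2 ≤ d) :
    2 * (∑ i ∈ s, a i + d) + 3 ^ #s - 4 * #s ≤ (∏ i ∈ s, (2 * a i - 1)) * (2 * d - 1) := by
  have hP := two_mul_sum_add_three_pow_sub_le_prod s a ha
  have hP3 := three_pow_card_le_prod_two_mul_sub_one s a ha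
  have h3 : (3 : R) ≤ 3 ^ #s := le_self_pow₀ (by norm_num) hs.card_pos.ne'
  nlinarith [mul_le_mul_of_nonneg_right (h3.trans hP3) (by linarith : (0 : R) ≤ 2 * d - 2)]

end ProductBound

theorem sum_eq_sum_Icc_card_filter_le {ι : Type*} [Fintype ι] (μ : ι → ℕ) {M : ℕ}
    (hM : ∀ k, μ k ≤ M) : ∑ k, μ k = ∑ j ∈ Icc 1 M, #{k | j ≤ μ k} := by
  have := sum_card_bipartiteAbove_eq_sum_card_bipartiteBelow (s := univ) (t := Icc 1 M)
    (r := fun k j => j ≤ μ k)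
  simp only [bipartiteAbove, bipartiteBelow] at this
  rw [← this]
  refine sum_congr rfl fun k _ => ?_
  rw [show {j ∈ Icc 1 M | j ≤ μ k} = Icc 1 (μ k) by ext j; simp; have := hM k; omega]
  simp

section Partition

variable {m : ℕ} (hm : 1 < m) {μ : Fin m → ℕ}

include hm in
theorem two_le_card_filter_le (hanti : Antitone μ) {j : ℕ} (hj : j ≤ μ ⟨1, hm⟩) :
    2 ≤ #{k | j ≤ μ k} := by
  have h0 : μ ⟨1, hm⟩ ≤ μ ⟨0, by omega⟩ := hanti (Fin.mk_le_mk.2 zero_le_one)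
  exact one_lt_card.2 ⟨⟨0, by omega⟩, by simp; omega, ⟨1, hm⟩, by simpa, by simp⟩

theorem card_filter_le_eq_one (hanti : Antitone μ) {j : ℕ} (hj : μ ⟨1, hm⟩ < j)
    (hj' : j ≤ μ ⟨0, by omega⟩) : #{k | j ≤ μ k} = 1 := by
  rw [card_eq_one]
  refine ⟨⟨0, by omega⟩, eq_singleton_iff_unique_mem.2 ⟨by simpa, fun k hk => ?_⟩⟩
  by_contra hk0
  have : μ k ≤ μ ⟨1, hm⟩ :=
    hanti (Fin.le_def.2 (Nat.one_le_iff_ne_zero.2 fun h => hk0 (Fin.ext h)))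
  simp only [mem_filter, mem_univ, true_and] at hk
  omega

theorem sum_eq_sum_Icc_card_filter_le_add (hanti : Antitone μ) :
    ∑ k, μ k = ∑ j ∈ Icc 1 (μ ⟨1, hm⟩), #{k | j ≤ μ k} + (μ ⟨0, by omega⟩ - μ ⟨1, hm⟩) := by
  have h10 : μ ⟨1, hm⟩ ≤ μ ⟨0, by omega⟩ := hanti (Fin.mk_le_mk.2 zero_le_one)
  have hIcc (x : ℕ) : Icc 1 x = Ioc 0 x := Icc_add_one_left_eq_Ioc 0 x
  rw [sum_eq_sum_Icc_card_filter_le μ fun k =>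
    hanti (show (⟨0, by omega⟩ : Fin m) ≤ k from Nat.zero_le _), hIcc, hIcc,
    ← sum_Ioc_consecutive _ (Nat.zero_le _) h10,
    sum_congr rfl fun j hj => card_filter_le_eq_one hm hanti (mem_Ioc.1 hj).1 (mem_Ioc.1 hj).2]
  simp

end Partition

/-- Let `μ = (μ₁,…,μ_m)` be a partition of `n` with `m > 1` parts and
`m_i = #{k : μ_k ≥ i}`.  Then `d_YHZ(μ) = (∏_{j=1}^{μ₂}(2m_j − 1))·c`, where `c = 1`
if `μ₁ = μ₂`, `c = 1 + 2/(2m_{μ₂}−1)` if `μ₁ = μ₂+1`, and `c = 2(μ₁−μ₂)−1` if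
`μ₁ > μ₂+1`, satisfies `d_YHZ(μ) ≥ 2n + 3^{μ₂} − 4μ₂`. -/
theorem dYHZ_lower_bound (n m : ℕ) (hm : 1 < m) (μ : Fin m → ℕ)
    (hanti : Antitone μ) (hpos : ∀ k, 0 < μ k) (hsum : ∑ k, μ k = n) :
    (∏ j ∈ Finset.Icc 1 (μ ⟨1, hm⟩),
        (2 * (((Finset.univ.filter fun k => j ≤ μ k).card : ℚ)) - 1))
      * (if μ ⟨0, Nat.lt_of_lt_of_le Nat.zero_lt_one hm.le⟩ = μ ⟨1, hm⟩ then (1 : ℚ)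
        else if μ ⟨0, Nat.lt_of_lt_of_le Nat.zero_lt_one hm.le⟩ = μ ⟨1, hm⟩ + 1 then
          1 + 2 / (2 * (((Finset.univ.filter fun k => μ ⟨1, hm⟩ ≤ μ k).card : ℚ)) - 1)
        else 2 * ((μ ⟨0, Nat.lt_of_lt_of_le Nat.zero_lt_one hm.le⟩ : ℚ) - (μ ⟨1, hm⟩ : ℚ)) - 1)
      ≥ 2 * (n : ℚ) + 3 ^ (μ ⟨1, hm⟩) - 4 * (μ ⟨1, hm⟩ : ℚ) := by
  have hcols : ∀ j ∈ Icc 1 (μ ⟨1, hm⟩), (2 : ℚ) ≤ #{k | j ≤ μ k} := fun j hj => by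
    exact_mod_cast two_le_card_filter_le hm hanti (mem_Icc.1 hj).2
  have h10 : μ ⟨1, hm⟩ ≤ μ ⟨0, by omega⟩ := hanti (Fin.mk_le_mk.2 zero_le_one)
  have hn : (n : ℚ) = ∑ j ∈ Icc 1 (μ ⟨1, hm⟩), (#{k | j ≤ μ k} : ℚ)
      + ((μ ⟨0, by omega⟩ : ℚ) - μ ⟨1, hm⟩) := by
    rw [← hsum, sum_eq_sum_Icc_card_filter_le_add hm hanti]
    push_cast [Nat.cast_sub h10]
    rfl
  have hcard : #(Icc 1 (μ ⟨1, hm⟩)) = μ ⟨1, hm⟩ := by simp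
  rw [ge_iff_le, hn]
  have ht : μ ⟨1, hm⟩ ∈ Icc 1 (μ ⟨1, hm⟩) := mem_Icc.2 ⟨hpos _, le_rfl⟩
  split_ifs with h0 h1
  · have key := two_mul_sum_add_three_pow_sub_le_prod _ _ hcols
    rw [hcard] at key
    rw [h0, sub_self, add_zero, mul_one]
    exact key
  · have key := two_mul_sum_add_one_add_three_pow_sub_le_prod_mul ht _ hcols
    rw [hcard] at key
    rw [h1]
    push_cast
    linarith
  · have hd : (2 : ℚ) ≤ (μ ⟨0, by omega⟩ : ℚ) - μ ⟨1, hm⟩ := by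
      rw [le_sub_iff_add_le]
      exact_mod_cast (by omega : 2 + μ ⟨1, hm⟩ ≤ μ ⟨0, Nat.zero_lt_of_lt hm⟩)
    have key := two_mul_sum_add_add_three_pow_sub_le_prod_mul ⟨_, ht⟩ _ hcols hd
    rwa [hcard] at key
end

section
/- For a univariate polynomial F of degree n with leading coefficient a_n, the determinant polynomial of the stack (F x^{γ₀−1},…,F x^0, F' x^{γ₁−1},…,F' x^0, …, F^{(s)} x^{γ_s−1},…, F^{(s)} x^0), where γ₀ = γ₁ − 1 and γ = (γ₁,…,γ_s) is a partition of n, equals a_n^{γ₁−n} times the determinant polynomial of the stack (F x^{n−2},…,F x^0, F' x^{γ₁−1},…,F^{(s)} x^0) obtained by extending the F-block up to x^{n−2}. -/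
open Polynomial

/-- The determinant polynomial of a list `L` of `N` polynomials (of degree `≤ N−1`):
the determinant of the `N×N` matrix whose `i`-th row lists the coefficients of
`L i` from `x^{N−1}` down to `x^0`. -/
noncomputable def dpList {R : Type*} [CommRing R] (L : List (Polynomial R)) : R :=
  Matrix.det (Matrix.of fun i j : Fin L.length => (L.get i).coeff (L.length - 1 - (j : ℕ)))

/-- The stack of rows `F^{(i)}·x^{Γᵢ−1}, …, F^{(i)}·x^0` for `i = 0, …` running
through the list `Γ = (Γ₀, Γ₁, …)`. -/
noncomputable def stackRows {R : Type*} [CommRing R] (F : Polynomial R) (Γ : List ℕ) :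
    List (Polynomial R) :=
  (Γ.zipIdx.map Prod.swap).flatMap fun ig => ((List.range ig.2).reverse).map fun e => derivative^[ig.1] F * X ^ e

/-- A partition of `n`: a weakly decreasing list of positive integers summing to `n`. -/
def IsPartition (γ : List ℕ) (n : ℕ) : Prop :=
  γ.Pairwise (· ≥ ·) ∧ (∀ x ∈ γ, 0 < x) ∧ γ.sum = n

/-!
Let `a = F.coeff n`. Once `m ≥ γ₁ - 1`, every row `F^{(i)} x^e` of `stackRows F (m :: γ)` has
`e < m + i`, hence degree below `m + n`. So the first column of the matrix of
`stackRows F ((m+1) :: γ)` is `(a, 0, …, 0)`, and expanding along it gives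
`dpList (stackRows F ((m+1) :: γ)) = a * dpList (stackRows F (m :: γ))`.
Going from `m = γ₁ - 1` up to `m = n - 1` peels off `a^(n - γ₁)`.
-/

namespace Polynomial

variable {R : Type*} [CommRing R]

theorem coeff_iterate_derivative_mul_X_pow_eq_zero (F : R[X]) {i e m : ℕ} (h : e < m + i) :
    (derivative^[i] F * X ^ e).coeff (m + F.natDegree) = 0 := by
  rw [coeff_mul_X_pow', coeff_iterate_derivative]
  split_ifs
  · rw [coeff_eq_zero_of_natDegree_lt (by omega), smul_zero]
  · rfl

lemma dpList_cons (P : R[X]) (L : List R[X]) (h : ∀ Q ∈ L, Q.coeff L.length = 0) :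
    dpList (P :: L) = P.coeff L.length * dpList L := by
  rw [dpList, Matrix.det_succ_column_zero, Fin.sum_univ_succ, Finset.sum_eq_zero]
  · simp only [dpList, List.length_cons, List.get_eq_getElem, Matrix.of_apply, Fin.succAbove_zero,
      List.getElem_cons_zero, add_tsub_cancel_right, Fin.val_zero, tsub_zero, pow_zero, one_mul, add_zero]
    congr
    ext i j
    simp only [Matrix.submatrix_apply, Matrix.of_apply, Fin.val_succ, List.getElem_cons_succ]
    congr 1
    omega
  · intro i _
    simp [h _ (List.getElem_mem _)]

lemma stackRows_length (F : R[X]) (Γ : List ℕ) : (stackRows F Γ).length = Γ.sum := by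
  simp [stackRows, List.length_flatMap, Function.comp_def]

lemma stackRows_cons_succ (F : R[X]) (m : ℕ) (γ : List ℕ) :
    stackRows F ((m + 1) :: γ) = (F * X ^ m) :: stackRows F (m :: γ) := by
  simp [stackRows, List.zipIdx_cons, List.range_succ]

lemma mem_stackRows {F Q : R[X]} {Γ : List ℕ} :
    Q ∈ stackRows F Γ ↔ ∃ (i : ℕ) (hi : i < Γ.length), ∃ e < Γ[i], Q = derivative^[i] F * X ^ e := by
  simp only [stackRows, List.mem_flatMap, List.mem_map, List.mem_reverse, List.mem_range, Prod.exists,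
    Prod.swap_prod_mk, Prod.mk.injEq, List.mem_zipIdx_iff_getElem?, eq_comm (b := Q)]
  constructor
  · rintro ⟨i, v, ⟨v, i, hv, rfl, rfl⟩, e, he, rfl⟩
    obtain ⟨hi, rfl⟩ := List.getElem?_eq_some_iff.mp hv
    exact ⟨i, hi, e, he, rfl⟩
  · rintro ⟨i, hi, e, he, rfl⟩
    exact ⟨i, Γ[i], ⟨_, _, List.getElem?_eq_getElem hi, rfl, rfl⟩, e, he, rfl⟩

section stack

variable (F : R[X]) {m : ℕ} {γ : List ℕ}

lemma coeff_eq_zero_of_mem_stackRows_cons (hγ : ∀ b ∈ γ, b ≤ m + 1) :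
    ∀ Q ∈ stackRows F (m :: γ), Q.coeff (m + F.natDegree) = 0 := by
  intro Q hQ
  obtain ⟨i, hi, e, he, rfl⟩ := mem_stackRows.mp hQ
  apply coeff_iterate_derivative_mul_X_pow_eq_zero
  cases i with
  | zero => simpa using he
  | succ j =>
    have := hγ _ (List.getElem_mem (Nat.lt_of_succ_lt_succ hi))
    simp only [List.getElem_cons_succ] at he
    omega

lemma dpList_stackRows_cons_succ (hsum : γ.sum = F.natDegree) (hγ : ∀ b ∈ γ, b ≤ m + 1) :
    dpList (stackRows F ((m + 1) :: γ)) = F.leadingCoeff * dpList (stackRows F (m :: γ)) := by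
  have hlen : (stackRows F (m :: γ)).length = m + F.natDegree := by
    rw [stackRows_length, List.sum_cons, hsum]
  rw [stackRows_cons_succ, dpList_cons _ _ (hlen ▸ coeff_eq_zero_of_mem_stackRows_cons F hγ), hlen,
    add_comm, coeff_mul_X_pow, leadingCoeff]

lemma dpList_stackRows_cons_add (hsum : γ.sum = F.natDegree) (hγ : ∀ b ∈ γ, b ≤ m + 1) (k : ℕ) :
    dpList (stackRows F ((m + k) :: γ)) = F.leadingCoeff ^ k * dpList (stackRows F (m :: γ)) := by
  induction k with
  | zero => simp
  | succ k ih =>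
    rw [← add_assoc, dpList_stackRows_cons_succ F hsum (fun b hb => (hγ b hb).trans (by omega)), ih,
      pow_succ', mul_assoc]

end stack

end Polynomial

theorem dp_reduced_eq_pow_mul_dp_extended_general (n : ℕ) (F : Polynomial ℂ)
    (hdeg : F.natDegree = n) (ha : F.coeff n ≠ 0)
    (γ : List ℕ) (hγ : IsPartition γ n) (hne : γ ≠ []) :
    dpList (stackRows F ((γ.headI - 1) :: γ))
      = (F.coeff n) ^ ((γ.headI : ℤ) - (n : ℤ)) * dpList (stackRows F ((n - 1) :: γ)) := by
  obtain ⟨hsorted, hpos, hsum⟩ := hγ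
  obtain ⟨g, t, rfl⟩ := List.exists_cons_of_ne_nil hne
  have hg : 0 < g := hpos g List.mem_cons_self
  have hgn : g ≤ n := by simp only [List.sum_cons] at hsum; omega
  have hle : ∀ b ∈ g :: t, b ≤ g - 1 + 1 :=
    List.forall_mem_cons.mpr ⟨by omega, fun b hb => (List.rel_of_pairwise_cons hsorted hb).trans (by omega)⟩
  have hext := dpList_stackRows_cons_add F (hsum.trans hdeg.symm) hle (n - g)
  rw [show g - 1 + (n - g) = n - 1 by omega, leadingCoeff, hdeg] at hext
  rw [List.headI_cons, hext, ← mul_assoc, ← zpow_natCast, ← zpow_add₀ ha, Nat.cast_sub hgn,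
    sub_add_sub_cancel, sub_self, zpow_zero, one_mul]

/-- For `F` of degree `n` with leading coefficient `a_n ≠ 0` and a
partition `γ = (γ₁,…,γ_s)` of `n` with `γ₀ := γ₁ − 1`, the determinant polynomial of
the stack `(F x^{γ₀−1},…,F x^0, F' x^{γ₁−1},…,F^{(s)} x^0)` equals `a_n^{γ₁−n}` times
the determinant polynomial of the stack extended so that the `F`-block runs from
`x^{n−2}` down to `x^0`. -/
theorem dp_reduced_eq_pow_mul_dp_extended (n : ℕ) (hn : 1 ≤ n) (F : Polynomial ℂ)
    (hdeg : F.natDegree = n) (ha : F.coeff n ≠ 0)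
    (γ : List ℕ) (hγ : IsPartition γ n) (hne : γ ≠ []) :
    dpList (stackRows F ((γ.headI - 1) :: γ))
      = (F.coeff n) ^ ((γ.headI : ℤ) - (n : ℤ)) * dpList (stackRows F ((n - 1) :: γ)) :=
  dp_reduced_eq_pow_mul_dp_extended_general n F hdeg ha γ hγ hne
end

section
/- Let F ∈ ℂ[x] have multiplicity vector μ (a partition of n = deg F). Then for every partition λ of n with μ̄ ≺_lex λ (λ strictly greater than the conjugate of μ in lexicographic order), the λ-discriminant D(λ) of F vanishes: D(λ) = 0. -/
open Polynomial

/-- The `γ`-discriminant `D(γ)` of `F`. -/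
noncomputable def Ddisc (F : Polynomial ℂ) (γ : List ℕ) : ℂ :=
  (F.coeff F.natDegree)⁻¹ * dpList (stackRows F ((γ.headI - 1) :: γ))

/-!
Write `μ̄ₖ = #{j | μⱼ ≥ k}`. Since `μ̄ <lex λ` and the parts of `λ` are positive, some prefix
satisfies `λ₁ + ⋯ + λₜ > μ̄₁ + ⋯ + μ̄ₜ = ∑ⱼ min(μⱼ, t)`. The polynomial
`G = ∏ⱼ (x − rⱼ)^(μⱼ − t)₊` divides `F, F′, …, F⁽ᵗ⁾`, so the first `λ₁ − 1 + λ₁ + ⋯ + λₜ` rows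
of the matrix are multiples of `G` of degree `< n + λ₁ − 1`. They live in a space of dimension
`n + λ₁ − 1 − deg G = λ₁ − 1 + ∑ⱼ min(μⱼ, t)`, which is smaller than their number, so the rows
are linearly dependent and the determinant vanishes.
-/

open Polynomial

theorem linearIndependent_get_of_isPrefix {R M : Type*} [Semiring R] [AddCommMonoid M]
    [Module R M] {A L : List M} (hAL : A <+: L) (hL : LinearIndependent R L.get) :
    LinearIndependent R A.get := by
  convert hL.comp (Fin.castLE hAL.length_le) (Fin.castLE_injective _) using 1
  funext i
  simp [hAL.getElem]

theorem dpList_eq_zero_of_isPrefix {R : Type*} [CommRing R] [IsDomain R] {A L : List R[X]}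
    (hAL : A <+: L) (hA : ¬ LinearIndependent R A.get) : dpList L = 0 := by
  refine Matrix.det_eq_zero_of_not_linearIndependent_rows fun hrows => hA ?_
  refine linearIndependent_get_of_isPrefix hAL ?_
  exact .of_comp (LinearMap.pi fun j : Fin L.length => lcoeff R (L.length - 1 - j)) hrows

theorem not_linearIndependent_of_dvd_of_degree_lt {R ι : Type*} [CommRing R] [IsDomain R]
    [Fintype ι] {G : R[X]} (hG : G ≠ 0) {N : ℕ} (hN : N < Fintype.card ι) {p : ι → R[X]}
    (hdvd : ∀ i, G ∣ p i) (hdeg : ∀ i, (p i).degree < ↑(G.natDegree + N)) :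
    ¬ LinearIndependent R p := by
  choose q hq using hdvd
  have hqN (i : ι) : q i ∈ degreeLT R N := by
    have := hdeg i
    rw [hq i, degree_mul, degree_eq_natDegree hG, Nat.cast_add] at this
    exact mem_degreeLT.2 ((WithBot.add_lt_add_iff_left WithBot.coe_ne_bot).1 this)
  intro hp
  have : Module.Finite R (degreeLT R N) := .equiv (degreeLTEquiv R N).symm
  have hq' : LinearIndependent R fun i => (⟨q i, hqN i⟩ : degreeLT R N) :=
    .of_comp (LinearMap.mulLeft R G ∘ₗ (degreeLT R N).subtype) <| by
      obtain rfl : p = fun i => G * q i := funext hq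
      exact hp
  have := hq'.fintype_card_le_finrank
  rw [(degreeLTEquiv R N).finrank_eq, Module.finrank_fin_fun] at this
  omega

theorem natDegree_prod_X_sub_C_pow {R ι : Type*} [CommRing R] [Nontrivial R] [Fintype ι]
    (r : ι → R) (ν : ι → ℕ) : (∏ j, (X - C (r j)) ^ ν j).natDegree = ∑ j, ν j := by
  rw [natDegree_prod_of_monic _ _ fun j _ => (monic_X_sub_C _).pow _]
  simp [(monic_X_sub_C _).natDegree_pow]

theorem prod_pow_sub_dvd_iterate_derivative {K ι : Type*} [Field K] [Fintype ι] {μ : ι → ℕ}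
    {r : ι → K} (hr : Function.Injective r) {F : K[X]} (hF : ∀ j, (X - C (r j)) ^ μ j ∣ F)
    {k t : ℕ} (hkt : k ≤ t) : ∏ j, (X - C (r j)) ^ (μ j - t) ∣ derivative^[k] F := by
  refine Finset.prod_dvd_of_coprime (fun j _ j' _ hne => (pairwise_coprime_X_sub_C hr hne).pow)
    fun j _ => ?_
  exact (pow_dvd_pow _ (by omega)).trans (pow_sub_dvd_iterate_derivative_of_pow_dvd k (hF j))

section stackRows

variable {R : Type*} [CommRing R] (F : R[X])

theorem length_stackRows (Γ : List ℕ) : (stackRows F Γ).length = Γ.sum := by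
  simp [stackRows, List.length_flatMap, Function.comp_def]

theorem stackRows_isPrefix_append (Γ Δ : List ℕ) :
    stackRows F Γ <+: stackRows F (Γ ++ Δ) := by
  simp only [stackRows, List.zipIdx_append, List.map_append, List.flatMap_append]
  exact List.prefix_append _ _

theorem mem_stackRows {Γ : List ℕ} {p : R[X]} :
    p ∈ stackRows F Γ ↔ ∃ k, ∃ hk : k < Γ.length, ∃ e < Γ[k], derivative^[k] F * X ^ e = p := by
  simp only [stackRows, List.mem_flatMap, List.mem_map, List.mem_zipIdx_iff_getElem?,
    List.mem_reverse, List.mem_range, List.getElem?_eq_some_iff]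
  constructor
  · rintro ⟨_, ⟨⟨g, k⟩, ⟨hk, hg⟩, rfl⟩, e, he, rfl⟩
    exact ⟨k, hk, e, hg ▸ he, rfl⟩
  · rintro ⟨k, hk, e, he, rfl⟩
    exact ⟨_, ⟨⟨Γ[k], k⟩, ⟨hk, rfl⟩, rfl⟩, e, he, rfl⟩

variable {F}

theorem degree_lt_of_mem_stackRows {p : R[X]} {n h : ℕ} (hF : F.natDegree ≤ n) {Γ : List ℕ}
    (hΓ : ∀ x ∈ Γ, x ≤ h) (hp : p ∈ stackRows F ((h - 1) :: Γ)) : p.degree < ↑(n + h - 1) := by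
  obtain ⟨k, hk, e, he, rfl⟩ := (mem_stackRows F).1 hp
  by_cases hk0 : derivative^[k] F = 0
  · simp [hk0]
  have hkF : k ≤ F.natDegree := by
    by_contra! hlt
    exact hk0 (iterate_derivative_eq_zero hlt)
  have hrow : (derivative^[k] F * X ^ e).natDegree ≤ F.natDegree - k + e :=
    natDegree_mul_le.trans (add_le_add (natDegree_iterate_derivative F k) (natDegree_X_pow_le e))
  have he' : e + 1 < h ∨ (0 < k ∧ e < h) := by
    cases k with
    | zero => exact .inl (by simp only [List.getElem_cons_zero] at he; omega)
    | succ k =>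
      simp only [List.getElem_cons_succ] at he
      exact .inr ⟨k.succ_pos, he.trans_le (hΓ _ (List.getElem_mem _))⟩
  exact degree_le_natDegree.trans_lt (by exact_mod_cast (show _ < n + h - 1 by omega))

end stackRows

theorem dpList_stackRows_eq_zero_of_sum_min_lt {K ι : Type*} [Field K] [Fintype ι] {μ : ι → ℕ}
    {r : ι → K} (hr : Function.Injective r) {F : K[X]} (hdvd : ∀ j, (X - C (r j)) ^ μ j ∣ F)
    (hdeg : F.natDegree ≤ ∑ j, μ j) {lam : List ℕ} {h : ℕ} (hle : ∀ x ∈ lam, x ≤ h) {t : ℕ}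
    (ht : ∑ j, min (μ j) t < (lam.take t).sum) :
    dpList (stackRows F ((h - 1) :: lam)) = 0 := by
  set G := ∏ j, (X - C (r j)) ^ (μ j - t)
  have hG : G ≠ 0 := (monic_prod_of_monic _ _ fun j _ => (monic_X_sub_C _).pow _).ne_zero
  have hGdeg : G.natDegree + ∑ j, min (μ j) t = ∑ j, μ j := by
    rw [natDegree_prod_X_sub_C_pow, ← Finset.sum_add_distrib]
    exact Finset.sum_congr rfl fun j _ => by omega
  have hprefix : stackRows F ((h - 1) :: lam.take t) <+: stackRows F ((h - 1) :: lam) := by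
    simpa using stackRows_isPrefix_append F ((h - 1) :: lam.take t) (lam.drop t)
  refine dpList_eq_zero_of_isPrefix hprefix
    (not_linearIndependent_of_dvd_of_degree_lt hG (N := h - 1 + ∑ j, min (μ j) t) ?_ ?_ ?_)
  · simpa [length_stackRows] using ht
  · intro i
    obtain ⟨k, hk, e, -, hrow⟩ := (mem_stackRows F).1 (List.get_mem _ i)
    rw [← hrow]
    refine (prod_pow_sub_dvd_iterate_derivative hr hdvd ?_).mul_right _
    simp only [List.length_cons, List.length_take] at hk
    omega
  · intro i
    refine (degree_lt_of_mem_stackRows hdeg (fun x hx => hle x (List.mem_of_mem_take hx))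
      (List.get_mem _ i)).trans_le ?_
    exact_mod_cast (by omega : (∑ j, μ j) + h - 1 ≤ G.natDegree + (h - 1 + ∑ j, min (μ j) t))

def conjugate {ι : Type*} [Fintype ι] (μ : ι → ℕ) (M : ℕ) : List ℕ :=
  (List.range M).map fun i => (Finset.univ.filter fun j => i + 1 ≤ μ j).card

theorem sum_conjugate {ι : Type*} [Fintype ι] (μ : ι → ℕ) (t : ℕ) :
    (conjugate μ t).sum = ∑ j, min (μ j) t := by
  have hcount (j : ι) :
      ((Finset.range t).filter fun i => i + 1 ≤ μ j) = Finset.range (min (μ j) t) := by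
    ext
    simp only [Finset.mem_filter, Finset.mem_range]
    omega
  calc (conjugate μ t).sum
      = ∑ i ∈ Finset.range t, (Finset.univ.filter fun j => i + 1 ≤ μ j).card := by
        simp [conjugate, Finset.sum_eq_multiset_sum, Multiset.range]
    _ = ∑ j, ((Finset.range t).filter fun i => i + 1 ≤ μ j).card := by
        simp only [Finset.card_filter]
        exact Finset.sum_comm
    _ = ∑ j, min (μ j) t := by simp only [hcount, Finset.card_range]

theorem sum_take_conjugate {ι : Type*} [Fintype ι] {μ : ι → ℕ} {M : ℕ} (hM : ∀ j, μ j ≤ M)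
    (t : ℕ) : ((conjugate μ M).take t).sum = ∑ j, min (μ j) t := by
  rw [conjugate, ← List.map_take, List.take_range, ← conjugate, sum_conjugate]
  exact Finset.sum_congr rfl fun j _ => by have := hM j; omega

theorem exists_sum_take_lt_of_lex {l₁ l₂ : List ℕ} (h : List.Lex (· < ·) l₁ l₂)
    (hpos : ∀ x ∈ l₂, 0 < x) : ∃ t, (l₁.take t).sum < (l₂.take t).sum := by
  induction h with
  | nil => exact ⟨1, by simpa using hpos _ List.mem_cons_self⟩
  | cons h ih =>
    obtain ⟨t, ht⟩ := ih fun x hx => hpos x (List.mem_cons_of_mem _ hx)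
    exact ⟨t + 1, by simpa using ht⟩
  | rel h => exact ⟨1, by simpa using h⟩

theorem le_headI_of_pairwise_ge {l : List ℕ} (hl : l.Pairwise (· ≥ ·)) {x : ℕ} (hx : x ∈ l) :
    x ≤ l.headI := by
  cases l with
  | nil => cases hx
  | cons y t =>
    rcases List.mem_cons.1 hx with rfl | hx
    · exact le_rfl
    · exact (List.pairwise_cons.mp hl).1 x hx

theorem Ddisc_eq_zero_of_lex_gt_general (n m : ℕ) (hm : 1 ≤ m) (μ : Fin m → ℕ)
    (hanti : Antitone μ)
    (r : Fin m → ℂ) (hr : Function.Injective r) (a : ℂ)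
    (F : Polynomial ℂ) (hF : F = C a * ∏ j : Fin m, (X - C (r j)) ^ μ j)
    (lam : List ℕ) (hlam : IsPartition lam n)
    (hlex : List.Lex (· < ·)
      ((List.range (μ ⟨0, hm⟩)).map fun i =>
        (Finset.univ.filter fun j => i + 1 ≤ μ j).card) lam) :
    Ddisc F lam = 0 := by
  obtain ⟨hsorted, hpos, -⟩ := hlam
  obtain ⟨t, ht⟩ := exists_sum_take_lt_of_lex (l₁ := conjugate μ (μ ⟨0, hm⟩)) hlex hpos
  rw [sum_take_conjugate (fun j => hanti (Nat.zero_le j.val)) t] at ht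
  have hdvd (j : Fin m) : (X - C (r j)) ^ μ j ∣ F :=
    hF ▸ (Finset.dvd_prod_of_mem _ (Finset.mem_univ j)).mul_left _
  have hdeg : F.natDegree ≤ ∑ j, μ j :=
    hF ▸ (natDegree_C_mul_le _ _).trans (natDegree_prod_X_sub_C_pow r μ).le
  rw [Ddisc, dpList_stackRows_eq_zero_of_sum_min_lt hr hdvd hdeg
    (fun x hx => le_headI_of_pairwise_ge hsorted hx) ht, mul_zero]

/-- Let `F = a(x−r₁)^{μ₁}⋯(x−r_m)^{μ_m}` with distinct roots and
weakly decreasing multiplicities `μ` summing to `n = deg F`.  Then for every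
partition `λ` of `n` that is strictly greater than the conjugate `μ̄` in the
lexicographic order, the `λ`-discriminant of `F` vanishes: `D(λ) = 0`. -/
theorem Ddisc_eq_zero_of_lex_gt (n m : ℕ) (hm : 1 ≤ m) (μ : Fin m → ℕ)
    (hanti : Antitone μ) (hpos : ∀ j, 1 ≤ μ j) (hsum : ∑ j, μ j = n)
    (r : Fin m → ℂ) (hr : Function.Injective r) (a : ℂ) (ha : a ≠ 0)
    (F : Polynomial ℂ) (hF : F = C a * ∏ j : Fin m, (X - C (r j)) ^ μ j)
    (lam : List ℕ) (hlam : IsPartition lam n)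
    (hlex : List.Lex (· < ·)
      ((List.range (μ ⟨0, hm⟩)).map fun i =>
        (Finset.univ.filter fun j => i + 1 ≤ μ j).card) lam) :
    Ddisc F lam = 0 :=
  Ddisc_eq_zero_of_lex_gt_general n m hm μ hanti r hr a F hF lam hlam hlex
end
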